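/- Let x ∈ ℂⁿ and let j be a nonnegative integer. Writing q = ⌊j/n⌋ and r = j mod n, the j-th power of K_x satisfies K_x^j = α_x^q · ( Π_{i=0}^{r−1} D_{π^i(x)} ) · C^r, where the empty product (when r = 0) is the identity matrix. -/

import Mathlib

/-!
Moving a permutation matrix past a diagonal matrix permutes the diagonal:
`C^k D_d = D_{d ∘ π^k} C^k`. Pushing every `C` in `(D_x C)^j` to the right therefore gives
`K_x^j = (Π_{i<j} D_{π^i(x)}) C^j`. For `j = n` we have `C^n = 1`, and the `ℓ`-th diagonal entry
of the product is `Π_{i<n} x_{ℓ+i} = α_x`, so `K_x^n = α_x I`; writing `j = nq + r` finishes.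
-/

/-- The `n`-by-`n` cyclic permutation matrix `C` with `(i,j)`-entry `δ_{π(i),j}`,
where `π(i) = (i mod n) + 1` (realized 0-based by `finRotate n : i ↦ i + 1`). -/
noncomputable def cycMat (n : ℕ) : Matrix (Fin n) (Fin n) ℂ :=
  (finRotate n).permMatrix ℂ

/-- `K_x := D_x C`. -/
noncomputable def Kmat {n : ℕ} (x : Fin n → ℂ) : Matrix (Fin n) (Fin n) ℂ :=
  Matrix.diagonal x * cycMat n

open Equiv

namespace Matrix

variable {m R : Type*} [Fintype m] [DecidableEq m] [Semiring R]

theorem permMatrix_pow (σ : Perm m) (k : ℕ) : (σ ^ k).permMatrix R = σ.permMatrix R ^ k := by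
  induction k with
  | zero => simp
  | succ k ih => rw [pow_succ, permMatrix_mul, ih, pow_succ']

theorem permMatrix_mul_diagonal (σ : Perm m) (d : m → R) :
    σ.permMatrix R * diagonal d = diagonal (d ∘ σ) * σ.permMatrix R := by
  rw [Perm.permMatrix, PEquiv.toMatrix_toPEquiv_mul, PEquiv.mul_toMatrix_toPEquiv]
  ext i j
  simp [diagonal_apply, Equiv.eq_symm_apply]

theorem diagonal_mul_permMatrix_pow (d : m → R) (σ : Perm m) (j : ℕ) :
    (diagonal d * σ.permMatrix R) ^ j =
      ((List.range j).map fun i => diagonal fun ℓ => d ((σ ^ i) ℓ)).prod * σ.permMatrix R ^ j := by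
  induction j with
  | zero => simp
  | succ j ih =>
    rw [pow_succ, ih, mul_assoc, ← mul_assoc (_ ^ j), ← permMatrix_pow, permMatrix_mul_diagonal,
      List.range_succ, List.map_append, List.prod_append, permMatrix_pow, pow_succ]
    simp only [List.map_singleton, List.prod_singleton, Function.comp_def, mul_assoc]

theorem list_prod_map_diagonal {ι : Type*} (l : List ι) (f : ι → m → R) :
    (l.map fun i => diagonal (f i)).prod = diagonal fun ℓ => (l.map fun i => f i ℓ).prod := by
  induction l with
  | nil => simp
  | cons i l ih => simp only [List.map_cons, List.prod_cons, ih, diagonal_mul_diagonal]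

end Matrix

open Matrix

open Fin.NatCast in
theorem finRotate_pow_apply {n : ℕ} [NeZero n] (i : ℕ) (ℓ : Fin n) :
    (finRotate n ^ i) ℓ = ℓ + i := by
  induction i with
  | zero => simp
  | succ i ih => rw [pow_succ', Perm.mul_apply, ih, finRotate_apply, Nat.cast_succ, add_assoc]

theorem finRotate_pow_self (n : ℕ) : finRotate n ^ n = 1 := by
  rcases n with _ | n
  · rfl
  · ext ℓ
    simp [finRotate_pow_apply]

theorem list_prod_range_map_finRotate_pow {M : Type*} [CommMonoid M] {n : ℕ} (x : Fin n → M)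
    (ℓ : Fin n) : ((List.range n).map fun i => x ((finRotate n ^ i) ℓ)).prod = ∏ k, x k := by
  have : NeZero n := ⟨ℓ.pos.ne'⟩
  simp only [finRotate_pow_apply]
  rw [← List.map_coe_finRange_eq_range, List.map_map, ← Fin.prod_univ_def]
  simp only [Function.comp_def, Fin.cast_val_eq_self]
  exact Equiv.prod_comp (Equiv.addLeft ℓ) x

theorem Kmat_pow_self {n : ℕ} (x : Fin n → ℂ) : Kmat x ^ n = (∏ k, x k) • 1 := by
  rw [Kmat, cycMat, diagonal_mul_permMatrix_pow, list_prod_map_diagonal, ← permMatrix_pow,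
    finRotate_pow_self, permMatrix_one, mul_one, smul_one_eq_diagonal]
  simp only [list_prod_range_map_finRotate_pow]

/-- For `x ∈ ℂⁿ` and `j ≥ 0`, with `q = ⌊j/n⌋` and `r = j mod n`,
`K_x^j = α_x^q • (Π_{i=0}^{r-1} D_{π^i(x)}) * C^r`, where `α_x = Π_k x_k` and
`π^i(x)` has `ℓ`-th entry `x_{π^i(ℓ)}`; the empty product is the identity. -/
theorem Kmat_pow {n : ℕ} (x : Fin n → ℂ) (j : ℕ) :
    Kmat x ^ j =
      (∏ k, x k) ^ (j / n) •
        (((List.range (j % n)).map fun i =>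
            Matrix.diagonal fun ℓ => x ((finRotate n ^ i) ℓ)).prod * cycMat n ^ (j % n)) := by
  conv_lhs => rw [← Nat.div_add_mod j n, pow_add, pow_mul, Kmat_pow_self, smul_pow, one_pow,
    smul_one_mul]
  rw [Kmat, cycMat, diagonal_mul_permMatrix_pow]
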